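/- arXiv:math/0009026 — 2 statements merged into one kernel-verified Lean document; each statement's English description precedes it below -/
import Mathlib

section
/- Let f : Γ → ℝ^m be piecewise linear on a closed convex domain Γ ⊆ ℝ^d with distinct affine components g_1, …, g_n : ℝ^d → ℝ^m. Then for each coordinate k ∈ {1,…,m} there is a finite family {S_j^k}_{j∈J} of subsets of {1,…,n} such that f_k(x) = max_{j∈J} min_{i∈S_j^k} (g_i)_k(x) for all x ∈ Γ. -/
open Finset
open scoped Classical

noncomputable section

/-- Dot product on `Fin d → ℝ`. -/
def dotp {d : ℕ} (a x : Fin d → ℝ) : ℝ := ∑ i, a i * x i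

/-- An (affine) linear function `x ↦ a ⬝ x + b`. -/
def IsAffineFn {d : ℕ} (g : (Fin d → ℝ) → ℝ) : Prop :=
  ∃ (a : Fin d → ℝ) (b : ℝ), ∀ x, g x = dotp a x + b

/-- A closed domain: the closure of a nonempty open set. -/
def IsClosedDomain {d : ℕ} (q : Set (Fin d → ℝ)) : Prop :=
  ∃ U : Set (Fin d → ℝ), IsOpen U ∧ U.Nonempty ∧ q = closure U

/-- `f` is piecewise linear on `Γ`: a finite family of closed domains covers `Γ`
and `f` agrees with an affine function on each of them. -/
def IsPWLOn {d : ℕ} (Γ : Set (Fin d → ℝ)) (f : (Fin d → ℝ) → ℝ) : Prop :=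
  ∃ 𝒬 : Finset (Set (Fin d → ℝ)),
    (∀ q ∈ 𝒬, IsClosedDomain q) ∧ (Γ = ⋃ q ∈ 𝒬, (q : Set (Fin d → ℝ))) ∧
    ∀ q ∈ 𝒬, ∃ g, IsAffineFn g ∧ ∀ x ∈ q, f x = g x

/-- `f` is piecewise linear on `Γ` with all pieces taken from the family `g`. -/
def IsPWLWith {d n : ℕ} (Γ : Set (Fin d → ℝ)) (f : (Fin d → ℝ) → ℝ)
    (g : Fin n → (Fin d → ℝ) → ℝ) : Prop :=
  ∃ 𝒬 : Finset (Set (Fin d → ℝ)),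
    (∀ q ∈ 𝒬, IsClosedDomain q) ∧ (Γ = ⋃ q ∈ 𝒬, (q : Set (Fin d → ℝ))) ∧
    ∀ q ∈ 𝒬, ∃ i, ∀ x ∈ q, f x = g i x

/-- The hyperplane `h` (a pair `(a, b)` encoding `{x | a ⬝ x = b}`) separates `P` and `Q`:
they lie in opposite open halfspaces. -/
def SepH {d : ℕ} (h : (Fin d → ℝ) × ℝ) (P Q : Set (Fin d → ℝ)) : Prop :=
  ((∀ x ∈ P, dotp h.1 x < h.2) ∧ (∀ x ∈ Q, h.2 < dotp h.1 x)) ∨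
  ((∀ x ∈ P, h.2 < dotp h.1 x) ∧ (∀ x ∈ Q, dotp h.1 x < h.2))

/-- The separation set `S(P,Q)`: hyperplanes of `H` separating `P` and `Q`. -/
def sepSet {d : ℕ} (H : Finset ((Fin d → ℝ) × ℝ)) (P Q : Set (Fin d → ℝ)) :
    Finset ((Fin d → ℝ) × ℝ) :=
  H.filter (fun h => SepH h P Q)

/-- The hyperplane encoded by the pair `h = (a, b)`. -/
def hypSet {d : ℕ} (h : (Fin d → ℝ) × ℝ) : Set (Fin d → ℝ) := {x | dotp h.1 x = h.2}

/-- The union of the hyperplanes of the arrangement `H`. -/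
def hypUnion {d : ℕ} (H : Finset ((Fin d → ℝ) × ℝ)) : Set (Fin d → ℝ) :=
  ⋃ h ∈ H, hypSet h

/-- The regions determined by a set `C`: the connected components of `C`. -/
def regionsOf {d : ℕ} (C : Set (Fin d → ℝ)) : Set (Set (Fin d → ℝ)) :=
  {P | ∃ x ∈ C, P = connectedComponentIn C x}

/-- The complement (inside `interior Γ`) of the arrangement associated with the
family of components `g`: points where all the `g i` take pairwise distinct values. -/
def armCompl {d n : ℕ} (Γ : Set (Fin d → ℝ)) (g : Fin n → (Fin d → ℝ) → ℝ) :
    Set (Fin d → ℝ) :=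
  {x | x ∈ interior Γ ∧ ∀ i j : Fin n, i ≠ j → g i x ≠ g j x}

/-- A vector-valued affine function. -/
def IsAffineFnV {d m : ℕ} (g : (Fin d → ℝ) → (Fin m → ℝ)) : Prop :=
  ∀ k, IsAffineFn (fun x => g x k)

/-- Vector-valued piecewise linearity with components from the family `g`. -/
def IsPWLWithV {d m n : ℕ} (Γ : Set (Fin d → ℝ)) (f : (Fin d → ℝ) → (Fin m → ℝ))
    (g : Fin n → (Fin d → ℝ) → (Fin m → ℝ)) : Prop :=
  ∃ 𝒬 : Finset (Set (Fin d → ℝ)),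
    (∀ q ∈ 𝒬, IsClosedDomain q) ∧ (Γ = ⋃ q ∈ 𝒬, (q : Set (Fin d → ℝ))) ∧
    ∀ q ∈ 𝒬, ∃ i, ∀ x ∈ q, f x = g i x

lemma cover_aux {α : Type*} [TopologicalSpace α] {ι : Type*} {s : Set α}
    (hconn : IsPreconnected s) (hne : s.Nonempty) (C : ι → Set α)
    (R : Finset ι) (hC : ∀ r ∈ R, IsClosed (C r))
    (hcov : s ⊆ ⋃ r ∈ R, C r)
    (hdisj : ∀ r ∈ R, ∀ r' ∈ R, r ≠ r' → (s ∩ C r ∩ C r') = ∅) :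
    ∃ r ∈ R, s ⊆ C r := by
  induction R using Finset.induction_on with
  | empty =>
    obtain ⟨z, hz⟩ := hne
    simpa using hcov hz
  | @insert a R ha ih =>
    by_cases hs : s ⊆ C a
    · exact ⟨a, Finset.mem_insert_self _ _, hs⟩
    · have hu : IsOpen (C a)ᶜ := (hC a (Finset.mem_insert_self _ _)).isOpen_compl
      have hRcl : IsClosed (⋃ r ∈ R, C r) :=
        Set.Finite.isClosed_biUnion R.finite_toSet
          (fun r hr => hC r (Finset.mem_insert_of_mem hr))
      have hv : IsOpen (⋃ r ∈ R, C r)ᶜ := hRcl.isOpen_compl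
      have hsuv : s ⊆ (C a)ᶜ ∪ (⋃ r ∈ R, C r)ᶜ := by
        intro x hx
        by_cases hxa : x ∈ C a
        · right
          intro hxR
          obtain ⟨r, hr, hxr⟩ := Set.mem_iUnion₂.mp hxR
          have hne' : a ≠ r := fun h => ha (h ▸ hr)
          have := hdisj a (Finset.mem_insert_self _ _) r (Finset.mem_insert_of_mem hr) hne'
          exact absurd (Set.eq_empty_iff_forall_notMem.mp this x ⟨⟨hx, hxa⟩, hxr⟩) (not_false)
        · exact Or.inl hxa
      have hempty : ¬(s ∩ ((C a)ᶜ ∩ (⋃ r ∈ R, C r)ᶜ)).Nonempty := by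
        rintro ⟨x, hxs, hxu, hxv⟩
        have := hcov hxs
        rw [Set.mem_iUnion₂] at this
        obtain ⟨r, hr, hxr⟩ := this
        rcases Finset.mem_insert.mp hr with h | h
        · exact hxu (h ▸ hxr)
        · exact hxv (Set.mem_iUnion₂.mpr ⟨r, h, hxr⟩)
      have hcases : ¬((s ∩ (C a)ᶜ).Nonempty ∧ (s ∩ (⋃ r ∈ R, C r)ᶜ).Nonempty) := by
        rintro ⟨h1, h2⟩
        exact hempty (hconn _ _ hu hv hsuv h1 h2)
      rcases not_and_or.mp hcases with h | h
      · exfalso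
        apply hs
        intro x hx
        by_contra hxa
        exact h ⟨x, hx, hxa⟩
      · have hsub : s ⊆ ⋃ r ∈ R, C r := by
          intro x hx
          by_contra hxR
          exact h ⟨x, hx, hxR⟩
        obtain ⟨r, hr, hrs⟩ := ih (fun r hr => hC r (Finset.mem_insert_of_mem hr)) hsub
          (fun r hr r' hr' hne' => hdisj r (Finset.mem_insert_of_mem hr) r'
            (Finset.mem_insert_of_mem hr') hne')
        exact ⟨r, Finset.mem_insert_of_mem hr, hrs⟩

lemma local_piece {n : ℕ} (φ : ℝ → ℝ) (hφ : ContinuousOn φ (Set.Icc 0 1))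
    (c s : Fin n → ℝ)
    (hcov : ∀ t ∈ Set.Icc (0:ℝ) 1, ∃ i, φ t = c i + s i * t)
    {t0 : ℝ} (ht0 : t0 ∈ Set.Ico (0:ℝ) 1) :
    ∃ i, ∃ δ > 0, t0 + δ ≤ 1 ∧ ∀ u ∈ Set.Icc t0 (t0 + δ), φ u = c i + s i * u := by
  set C : ℝ × ℝ → Set ℝ := fun r => Set.Icc 0 1 ∩ (fun u => φ u - (r.1 + r.2 * u)) ⁻¹' {0}
    with hCdef
  have hCmem : ∀ r u, u ∈ C r ↔ u ∈ Set.Icc (0:ℝ) 1 ∧ φ u = r.1 + r.2 * u := by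
    intro r u
    simp [hCdef, sub_eq_zero]
  have hCclosed : ∀ r, IsClosed (C r) := by
    intro r
    apply ContinuousOn.preimage_isClosed_of_isClosed
      (hφ.sub ((continuous_const.add (continuous_const.mul continuous_id)).continuousOn))
      isClosed_Icc isClosed_singleton
  set R : Finset (ℝ × ℝ) := Finset.image (fun i => (c i, s i)) Finset.univ with hRdef
  set R' : Finset (ℝ × ℝ) := R.filter (fun r => φ t0 = r.1 + r.2 * t0) with hR'def
  set U : Set ℝ := (⋃ r ∈ (R \ R'), C r)ᶜ with hUdef
  have hUopen : IsOpen U :=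
    (Set.Finite.isClosed_biUnion (R \ R').finite_toSet (fun r _ => hCclosed r)).isOpen_compl
  have ht0U : t0 ∈ U := by
    intro hmem
    obtain ⟨r, hr, hxr⟩ := Set.mem_iUnion₂.mp hmem
    rw [Finset.mem_sdiff] at hr
    have h1 := (hCmem r t0).mp hxr
    exact hr.2 (Finset.mem_filter.mpr ⟨hr.1, h1.2⟩)
  obtain ⟨ε, hε, hball⟩ := Metric.isOpen_iff.mp hUopen t0 ht0U
  set δ : ℝ := min (ε / 2) (1 - t0) with hδdef
  have hδ : 0 < δ := lt_min (by linarith) (by linarith [ht0.2])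
  have hδ1 : t0 + δ ≤ 1 := by
    have := min_le_right (ε / 2) (1 - t0)
    linarith [this]
  have hIccU : Set.Icc t0 (t0 + δ) ⊆ U := by
    intro u hu
    apply hball
    rw [Metric.mem_ball, Real.dist_eq, abs_sub_lt_iff]
    have h2 := min_le_left (ε / 2) (1 - t0)
    constructor <;> [skip; skip] <;> nlinarith [hu.1, hu.2]
  have hIccsub : Set.Icc t0 (t0 + δ) ⊆ Set.Icc (0:ℝ) 1 := by
    intro u hu
    exact ⟨le_trans ht0.1 hu.1, le_trans hu.2 hδ1⟩
  set J : Set ℝ := Set.Ioc t0 (t0 + δ) with hJdef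
  have hJne : J.Nonempty := Set.nonempty_Ioc.mpr (lt_add_of_pos_right _ hδ)
  have hJIcc : J ⊆ Set.Icc t0 (t0 + δ) := Set.Ioc_subset_Icc_self
  have hJcov : J ⊆ ⋃ r ∈ R', C r := by
    intro u hu
    have huI : u ∈ Set.Icc (0:ℝ) 1 := hIccsub (hJIcc hu)
    obtain ⟨i, hi⟩ := hcov u huI
    have hrR : (c i, s i) ∈ R := Finset.mem_image.mpr ⟨i, Finset.mem_univ i, rfl⟩
    have huC : u ∈ C (c i, s i) := (hCmem _ u).mpr ⟨huI, hi⟩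
    have huU : u ∈ U := hIccU (hJIcc hu)
    have : (c i, s i) ∈ R' := by
      by_contra hnot
      exact huU (Set.mem_iUnion₂.mpr ⟨(c i, s i), Finset.mem_sdiff.mpr ⟨hrR, hnot⟩, huC⟩)
    exact Set.mem_iUnion₂.mpr ⟨(c i, s i), this, huC⟩
  have hJdisj : ∀ r ∈ R', ∀ r' ∈ R', r ≠ r' → (J ∩ C r ∩ C r') = ∅ := by
    intro r hr r' hr' hne
    rw [Set.eq_empty_iff_forall_notMem]
    rintro u ⟨⟨huJ, hur⟩, hur'⟩
    have h1 := ((hCmem r u).mp hur).2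
    have h2 := ((hCmem r' u).mp hur').2
    have h3 := (Finset.mem_filter.mp hr).2
    have h4 := (Finset.mem_filter.mp hr').2
    have hut0 : u ≠ t0 := ne_of_gt huJ.1
    apply hne
    have hkey : (r.2 - r'.2) * (u - t0) = 0 := by linarith
    rcases mul_eq_zero.mp hkey with h | h
    · have hs2 : r.2 = r'.2 := by linarith
      have hs1 : r.1 = r'.1 := by
        rw [hs2] at h3
        linarith
      exact Prod.ext hs1 hs2
    · exact absurd (by linarith : u = t0) hut0
  obtain ⟨r, hrR', hJsub⟩ := cover_aux isPreconnected_Ioc hJne C R'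
    (fun r _ => hCclosed r) hJcov hJdisj
  have hIccC : Set.Icc t0 (t0 + δ) ⊆ C r := by
    have h1 : closure J ⊆ C r := closure_minimal hJsub (hCclosed r)
    rwa [hJdef, closure_Ioc (ne_of_lt (lt_add_of_pos_right _ hδ))] at h1
  obtain ⟨i, _, hir⟩ := Finset.mem_image.mp ((Finset.mem_filter.mp hrR').1)
  refine ⟨i, δ, hδ, hδ1, fun u hu => ?_⟩
  have := ((hCmem r u).mp (hIccC hu)).2
  rw [← hir] at this
  exact this

lemma key1d {n : ℕ} (φ : ℝ → ℝ) (hφ : ContinuousOn φ (Set.Icc 0 1))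
    (c s : Fin n → ℝ)
    (hcov : ∀ t ∈ Set.Icc (0:ℝ) 1, ∃ i, φ t = c i + s i * t) :
    ∃ i, φ 0 ≤ c i ∧ c i + s i ≤ φ 1 := by
  set A : Fin n → Set ℝ := fun i => Set.Icc 0 1 ∩ (fun t => φ t - (c i + s i * t)) ⁻¹' Set.Ici 0
    with hAdef
  have hAmem : ∀ i t, t ∈ A i ↔ t ∈ Set.Icc (0:ℝ) 1 ∧ c i + s i * t ≤ φ t := by
    intro i t
    simp [hAdef, sub_nonneg]
  have hAclosed : ∀ i, IsClosed (A i) := fun i =>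
    ContinuousOn.preimage_isClosed_of_isClosed
      (hφ.sub ((continuous_const.add (continuous_const.mul continuous_id)).continuousOn))
      isClosed_Icc isClosed_Ici
  set G : Finset (Fin n) := Finset.univ.filter (fun i => φ 0 ≤ c i) with hGdef
  set T : Set ℝ := ⋃ i ∈ G, A i with hTdef
  have hTmem : ∀ t, t ∈ T ↔ ∃ i, φ 0 ≤ c i ∧ t ∈ Set.Icc (0:ℝ) 1 ∧ c i + s i * t ≤ φ t := by
    intro t
    constructor
    · intro ht
      obtain ⟨i, hiG, hiA⟩ := Set.mem_iUnion₂.mp ht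
      exact ⟨i, (Finset.mem_filter.mp hiG).2, (hAmem i t).mp hiA⟩
    · rintro ⟨i, h1, h2, h3⟩
      exact Set.mem_iUnion₂.mpr ⟨i, Finset.mem_filter.mpr ⟨Finset.mem_univ _, h1⟩,
        (hAmem i t).mpr ⟨h2, h3⟩⟩
  have hTclosed : IsClosed T :=
    Set.Finite.isClosed_biUnion G.finite_toSet (fun i _ => hAclosed i)
  have h0T : (0:ℝ) ∈ T := by
    obtain ⟨i, hi⟩ := hcov 0 (Set.mem_Icc.mpr ⟨le_refl _, zero_le_one⟩)
    rw [hTmem]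
    exact ⟨i, by linarith [hi], Set.mem_Icc.mpr ⟨le_refl _, zero_le_one⟩, by linarith [hi]⟩
  have hTbdd : BddAbove T := by
    refine ⟨1, fun t ht => ?_⟩
    exact (((hTmem t).mp ht).choose_spec.2.1).2
  set t0 : ℝ := sSup T with ht0def
  have ht0T : t0 ∈ T := hTclosed.csSup_mem ⟨0, h0T⟩ hTbdd
  obtain ⟨i, hic, ht0I, hit0⟩ := (hTmem t0).mp ht0T
  rcases eq_or_lt_of_le ht0I.2 with heq | hlt
  · refine ⟨i, hic, ?_⟩
    rw [heq] at hit0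
    linarith
  · exfalso
    obtain ⟨j, δ, hδ, hδ1, hj⟩ := local_piece φ hφ c s hcov (Set.mem_Ico.mpr ⟨ht0I.1, hlt⟩)
    set t1 : ℝ := t0 + δ with ht1def
    have ht1I : t1 ∈ Set.Icc (0:ℝ) 1 := ⟨by linarith [ht0I.1], hδ1⟩
    have hφt0 : φ t0 = c j + s j * t0 := hj t0 ⟨le_refl _, by linarith⟩
    have hφt1 : φ t1 = c j + s j * t1 := hj t1 ⟨by linarith, le_refl _⟩
    have ht1T : t1 ∈ T := by
      rw [hTmem]
      rcases le_or_gt (s i) (s j) with hs | hs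
      · refine ⟨i, hic, ht1I, ?_⟩
        rw [hφt1]
        have : c i + s i * t0 ≤ c j + s j * t0 := by linarith [hφt0]
        nlinarith
      · refine ⟨j, ?_, ht1I, by rw [hφt1]⟩
        have h1 : c i + s i * t0 ≤ c j + s j * t0 := by linarith [hφt0]
        nlinarith [ht0I.1]
    have := le_csSup hTbdd ht1T
    linarith

lemma dotp_continuous {d : ℕ} (a : Fin d → ℝ) : Continuous (fun x => dotp a x) := by
  unfold dotp
  exact continuous_finset_sum _ (fun i _ => continuous_const.mul (continuous_apply i))

lemma dotp_comb {d : ℕ} (a x y : Fin d → ℝ) (t : ℝ) :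
    dotp a ((1 - t) • x + t • y) = (1 - t) * dotp a x + t * dotp a y := by
  unfold dotp
  rw [Finset.mul_sum, Finset.mul_sum, ← Finset.sum_add_distrib]
  refine Finset.sum_congr rfl (fun i _ => ?_)
  simp only [Pi.add_apply, Pi.smul_apply, smul_eq_mul]
  ring

lemma affine_continuous {d : ℕ} {g : (Fin d → ℝ) → ℝ} (hg : IsAffineFn g) : Continuous g := by
  obtain ⟨a, b, hab⟩ := hg
  have : g = fun x => dotp a x + b := funext hab
  rw [this]
  exact (dotp_continuous a).add continuous_const

lemma pwl_continuousOn {d : ℕ} {Γ : Set (Fin d → ℝ)} {F : (Fin d → ℝ) → ℝ}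
    {𝒬 : Finset (Set (Fin d → ℝ))}
    (hcl : ∀ q ∈ 𝒬, IsClosedDomain q) (hΓ : Γ = ⋃ q ∈ 𝒬, (q : Set (Fin d → ℝ)))
    (hpc : ∀ q ∈ 𝒬, ∃ G, IsAffineFn G ∧ ∀ x ∈ q, F x = G x) :
    ContinuousOn F Γ := by
  have hrw : (⋃ q ∈ 𝒬, (q : Set (Fin d → ℝ))) = ⋃ q : ↥𝒬, (q : Set (Fin d → ℝ)) := by
    ext z; simp
  rw [hΓ, hrw]
  apply LocallyFinite.continuousOn_iUnion (locallyFinite_of_finite _)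
  · rintro ⟨q, hq⟩
    obtain ⟨U, _, _, hU⟩ := hcl q hq
    show IsClosed q
    rw [hU]
    exact isClosed_closure
  · rintro ⟨q, hq⟩
    obtain ⟨G, hGa, hGq⟩ := hpc q hq
    exact ((affine_continuous hGa).continuousOn).congr (fun z hz => hGq z hz)

lemma key_lemma {d n : ℕ} {Γ : Set (Fin d → ℝ)} (hΓv : Convex ℝ Γ)
    {F : (Fin d → ℝ) → ℝ} (hFc : ContinuousOn F Γ)
    {h : Fin n → (Fin d → ℝ) → ℝ} (hha : ∀ i, IsAffineFn (h i))
    (hact : ∀ z ∈ Γ, ∃ i, F z = h i z)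
    {x y : Fin d → ℝ} (hx : x ∈ Γ) (hy : y ∈ Γ) :
    ∃ i, F x ≤ h i x ∧ h i y ≤ F y := by
  choose a b hab using hha
  set γ : ℝ → (Fin d → ℝ) := fun t => (1 - t) • x + t • y with hγdef
  have hγΓ : ∀ t ∈ Set.Icc (0:ℝ) 1, γ t ∈ Γ := by
    intro t ht
    exact hΓv hx hy (by linarith [ht.2]) ht.1 (by ring)
  have hγc : Continuous γ :=
    ((continuous_const.sub continuous_id).smul continuous_const).add
      (continuous_id.smul continuous_const)
  set φ : ℝ → ℝ := fun t => F (γ t) with hφdef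
  have hφc : ContinuousOn φ (Set.Icc 0 1) :=
    hFc.comp hγc.continuousOn hγΓ
  have hline : ∀ i t, h i (γ t) =
      (dotp (a i) x + b i) + (dotp (a i) y - dotp (a i) x) * t := by
    intro i t
    rw [hab, hγdef]
    simp only
    rw [dotp_comb]
    ring
  have hcov : ∀ t ∈ Set.Icc (0:ℝ) 1, ∃ i,
      φ t = (dotp (a i) x + b i) + (dotp (a i) y - dotp (a i) x) * t := by
    intro t ht
    obtain ⟨i, hi⟩ := hact (γ t) (hγΓ t ht)
    exact ⟨i, by rw [hφdef]; simp only; rw [hi, hline]⟩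
  obtain ⟨i, h0, h1⟩ := key1d φ hφc _ _ hcov
  refine ⟨i, ?_, ?_⟩
  · have hγ0 : γ 0 = x := by simp [hγdef]
    have : h i x = dotp (a i) x + b i := hab i x
    rw [this]
    calc F x = φ 0 := by rw [hφdef]; simp only; rw [hγ0]
    _ ≤ dotp (a i) x + b i := h0
  · have hγ1 : γ 1 = y := by simp [hγdef]
    have : h i y = dotp (a i) y + b i := hab i y
    rw [this]
    calc dotp (a i) y + b i
        = (dotp (a i) x + b i) + (dotp (a i) y - dotp (a i) x) := by ring
    _ ≤ φ 1 := h1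
    _ = F y := by rw [hφdef]; simp only; rw [hγ1]

/-- coordinatewise max–min representation for vector-valued piecewise
linear functions. -/
theorem pwl_max_min_representation_vector {d m n : ℕ} (hn : 0 < n)
    {Γ : Set (Fin d → ℝ)} (hΓc : IsClosed Γ) (hΓv : Convex ℝ Γ)
    {f : (Fin d → ℝ) → (Fin m → ℝ)} {g : Fin n → (Fin d → ℝ) → (Fin m → ℝ)}
    (hga : ∀ i, IsAffineFnV (g i)) (hgd : Function.Injective g)
    (hf : IsPWLWithV Γ f g) :
    ∀ k : Fin m, ∃ (m' : ℕ) (hm' : 0 < m') (S : Fin m' → Finset (Fin n))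
      (hS : ∀ j, (S j).Nonempty),
      ∀ x ∈ Γ, f x k =
        Finset.univ.sup' ⟨⟨0, hm'⟩, Finset.mem_univ _⟩
          (fun j => (S j).inf' (hS j) (fun i => g i x k)) := by
  intro k
  obtain ⟨𝒬, hcl, hΓeq, hpc⟩ := hf
  have hha : ∀ i, IsAffineFn (fun x => g i x k) := fun i => hga i k
  have hact : ∀ z ∈ Γ, ∃ i, f z k = g i z k := by
    intro z hz
    rw [hΓeq] at hz
    obtain ⟨q, hq, hzq⟩ := Set.mem_iUnion₂.mp hz
    obtain ⟨i, hi⟩ := hpc q hq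
    exact ⟨i, congrFun (hi z hzq) k⟩
  have hFc : ContinuousOn (fun x => f x k) Γ := by
    refine pwl_continuousOn hcl hΓeq (fun q hq => ?_)
    obtain ⟨i, hi⟩ := hpc q hq
    exact ⟨fun x => g i x k, hha i, fun x hx => congrFun (hi x hx) k⟩
  have hkey : ∀ x ∈ Γ, ∀ y ∈ Γ, ∃ i, f x k ≤ g i x k ∧ g i y k ≤ f y k :=
    fun x hx y hy => key_lemma hΓv hFc hha hact hx hy
  by_cases hΓne : Γ.Nonempty
  · set Sset : (Fin d → ℝ) → Finset (Fin n) :=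
      fun z => Finset.univ.filter (fun i => f z k ≤ g i z k) with hSdef
    have hSne : ∀ z ∈ Γ, (Sset z).Nonempty := by
      intro z hz
      obtain ⟨i, hi⟩ := hact z hz
      exact ⟨i, Finset.mem_filter.mpr ⟨Finset.mem_univ _, le_of_eq hi⟩⟩
    set T : Finset (Finset (Fin n)) :=
      Finset.univ.filter (fun S => ∃ z, z ∈ Γ ∧ Sset z = S) with hTdef
    obtain ⟨z0, hz0⟩ := hΓne
    have hTmem : ∀ z ∈ Γ, Sset z ∈ T := fun z hz =>
      Finset.mem_filter.mpr ⟨Finset.mem_univ _, z, hz, rfl⟩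
    have hm' : 0 < T.card := Finset.card_pos.mpr ⟨Sset z0, hTmem z0 hz0⟩
    set e : ↥T ≃ Fin T.card := T.equivFin with hedef
    have hS : ∀ j : Fin T.card, ((e.symm j : Finset (Fin n))).Nonempty := by
      intro j
      obtain ⟨-, z, hz, hzS⟩ := Finset.mem_filter.mp (e.symm j).2
      rw [← hzS]
      exact hSne z hz
    refine ⟨T.card, hm', fun j => (e.symm j : Finset (Fin n)), hS, ?_⟩
    intro x hx
    apply le_antisymm
    · have hj : ((e.symm (e ⟨Sset x, hTmem x hx⟩) : Finset (Fin n))) = Sset x := by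
        rw [Equiv.symm_apply_apply]
      refine le_trans ?_ (Finset.le_sup' _ (Finset.mem_univ (e ⟨Sset x, hTmem x hx⟩)))
      apply Finset.le_inf'
      intro i hi
      simp only [Equiv.symm_apply_apply] at hi
      exact (Finset.mem_filter.mp hi).2
    · apply Finset.sup'_le
      intro j _
      obtain ⟨-, z, hz, hzS⟩ := Finset.mem_filter.mp (e.symm j).2
      obtain ⟨i, hi1, hi2⟩ := hkey z hz x hx
      have hiS : i ∈ (e.symm j : Finset (Fin n)) := by
        rw [← hzS]
        exact Finset.mem_filter.mpr ⟨Finset.mem_univ _, hi1⟩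
      exact le_trans (Finset.inf'_le _ hiS) hi2
  · refine ⟨1, one_pos, fun _ => {⟨0, hn⟩}, fun _ => ⟨⟨0, hn⟩, Finset.mem_singleton_self _⟩,
      fun x hx => absurd ⟨x, hx⟩ hΓne⟩
end
end

section
/- Let f be a piecewise linear function on closed convex Γ with components g_1,…,g_n, let P be a region of the associated arrangement with f = g_{n(P)} on P, and define S_P = {i : g_i(x) ≥ g_{n(P)}(x) for all x ∈ P} and F_P(x) = min_{i∈S_P} g_i(x). Then F_P(x) = f(x) for all x ∈ P, and F_Q(x) ≤ f(x) for all x ∈ P and every region Q. -/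
open Finset
open scoped Classical

noncomputable section

/-!
For the first claim, `p ∈ S_P`, and every `i ∈ S_P` satisfies `g i ≥ g p = f` on `P`. For the
second, pick `y ∈ Q`; the key lemma gives `k` with `g k x ≤ f x` and `g k y ≥ f y = g q y`. No two
components cross inside a region, so `g k ≥ g q` on all of `Q`, i.e. `k ∈ S_Q`, and
`F_Q x ≤ g k x ≤ f x`.

The key lemma is one-dimensional after restricting to the segment from `x` to `y`: a continuous
`φ` on `[0, 1]` that agrees at each point with one of finitely many lines has a line starting
below `φ` and ending above it. The set of `t` at which `φ` lies below some line starting below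
`φ 0` is closed and contains `0`, and it extends to the right of each of its points `t < 1`: a
line that meets `φ` just after `t` either starts below `φ 0` itself, or it starts above the
witness line while not exceeding it at `t`, and then stays below it afterwards.
-/

open Filter Topology AffineMap

lemma lineMap_lt_lineMap_of_lt_of_le {a b c d t s : ℝ} (hca : c < a) (ht₀ : 0 ≤ t)
    (ht : lineMap a b t ≤ lineMap c d t) (hts : t < s) : lineMap a b s < lineMap c d s := by
  simp only [lineMap_apply_ring'] at *
  nlinarith [mul_pos (sub_pos.2 hca) (sub_pos.2 hts)]

section Lines

variable {ι : Type*} {φ : ℝ → ℝ} {u v : ι → ℝ}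

lemma isClosed_setOf_exists_ge_lineMap [Finite ι] (hφ : ContinuousOn φ (Set.Icc 0 1)) :
    IsClosed ({t | ∃ i, u i ≤ φ 0 ∧ φ t ≤ lineMap (u i) (v i) t} ∩ Set.Icc 0 1) := by
  have : {t | ∃ i, u i ≤ φ 0 ∧ φ t ≤ lineMap (u i) (v i) t} ∩ Set.Icc 0 1 = ⋃ i ∈ {i | u i ≤ φ 0},
      Set.Icc 0 1 ∩ (fun t => φ t - lineMap (u i) (v i) t) ⁻¹' Set.Iic 0 := by
    ext t
    simp only [Set.mem_inter_iff, Set.mem_ofPred_eq, Set.mem_iUnion, Set.mem_preimage,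
      Set.mem_Iic, sub_nonpos, exists_prop]
    tauto
  rw [this]
  exact (Set.toFinite _).isClosed_biUnion fun i _ =>
    (hφ.sub lineMap_continuous.continuousOn).preimage_isClosed_of_isClosed isClosed_Icc
      isClosed_Iic

lemma eventually_exists_ge_lineMap_of_eq (hφ : ContinuousOn φ (Set.Icc 0 1)) {t : ℝ}
    (ht : t ∈ Set.Ico 0 1) {j : ι} (hj : u j ≤ φ 0) (hjt : φ t ≤ lineMap (u j) (v j) t) (i : ι) :
    ∀ᶠ s in 𝓝[>] t, φ s = lineMap (u i) (v i) s →
      ∃ k, u k ≤ φ 0 ∧ φ s ≤ lineMap (u k) (v k) s := by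
  by_cases hit : φ t = lineMap (u i) (v i) t
  · filter_upwards [self_mem_nhdsWithin] with s hts hs
    by_cases hi : u i ≤ φ 0
    · exact ⟨i, hi, hs.le⟩
    · exact ⟨j, hj, hs.trans_le
        (lineMap_lt_lineMap_of_lt_of_le (by linarith) ht.1 (hit ▸ hjt) hts).le⟩
  · have hne : ∀ᶠ s in 𝓝[Set.Icc 0 1] t, φ s ≠ lineMap (u i) (v i) s :=
      ((hφ t (Set.Ico_subset_Icc_self ht)).sub
        lineMap_continuous.continuousWithinAt).eventually_ne (sub_ne_zero.2 hit) |>.mono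
        fun s hs => sub_ne_zero.1 hs
    filter_upwards [nhdsWithin_le_of_mem (Icc_mem_nhdsGT_of_mem ht) hne] with s hs h
    exact absurd h hs

theorem exists_lineMap_le_and_ge [Finite ι] (hφ : ContinuousOn φ (Set.Icc 0 1))
    (hcov : ∀ t ∈ Set.Icc (0 : ℝ) 1, ∃ i, φ t = lineMap (u i) (v i) t) :
    ∃ i, u i ≤ φ 0 ∧ φ 1 ≤ v i := by
  set S := {t | ∃ i, u i ≤ φ 0 ∧ φ t ≤ lineMap (u i) (v i) t}
  have h0 : (0 : ℝ) ∈ S := by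
    obtain ⟨i, hi⟩ := hcov 0 (Set.left_mem_Icc.2 zero_le_one)
    exact ⟨i, by simp [hi], hi.le⟩
  have hS : Set.Icc 0 1 ⊆ S := by
    refine (isClosed_setOf_exists_ge_lineMap hφ).Icc_subset_of_forall_mem_nhdsWithin h0 ?_
    rintro t ⟨⟨j, hj, hjt⟩, ht⟩
    filter_upwards [Icc_mem_nhdsGT_of_mem ht, Filter.eventually_all.2
      (eventually_exists_ge_lineMap_of_eq hφ ht hj hjt)] with s hs himp
    obtain ⟨i, hi⟩ := hcov s hs
    exact himp i hi
  obtain ⟨i, hi, h1⟩ := hS (Set.right_mem_Icc.2 zero_le_one)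
  exact ⟨i, hi, by simpa using h1⟩

end Lines

section PiecewiseLinear

variable {d n : ℕ} {Γ : Set (Fin d → ℝ)} {f : (Fin d → ℝ) → ℝ} {g : Fin n → (Fin d → ℝ) → ℝ}

lemma IsAffineFn.continuous {h : (Fin d → ℝ) → ℝ} (hh : IsAffineFn h) : Continuous h := by
  obtain ⟨a, b, hab⟩ := hh
  rw [show h = fun x => ∑ i, a i * x i + b from funext hab]
  fun_prop

lemma IsAffineFn.apply_lineMap {h : (Fin d → ℝ) → ℝ} (hh : IsAffineFn h) (x y : Fin d → ℝ)
    (t : ℝ) : h (lineMap x y t) = lineMap (h x) (h y) t := by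
  obtain ⟨a, b, hab⟩ := hh
  have hdot : ∀ z, dotp a z = a ⬝ᵥ z := fun _ => rfl
  simp only [hab, hdot, lineMap_apply_module', dotProduct_add, dotProduct_smul, dotProduct_sub,
    smul_eq_mul]
  ring

lemma IsClosedDomain.isClosed {q : Set (Fin d → ℝ)} (hq : IsClosedDomain q) : IsClosed q := by
  obtain ⟨U, -, -, rfl⟩ := hq
  exact isClosed_closure

lemma IsPWLWith.exists_eq (hf : IsPWLWith Γ f g) {x : Fin d → ℝ} (hx : x ∈ Γ) :
    ∃ i, f x = g i x := by
  obtain ⟨𝒬, -, rfl, hpiece⟩ := hf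
  obtain ⟨q, hq, hxq⟩ := Set.mem_iUnion₂.1 hx
  obtain ⟨i, hi⟩ := hpiece q hq
  exact ⟨i, hi x hxq⟩

lemma IsPWLWith.continuousOn (hga : ∀ i, IsAffineFn (g i)) (hf : IsPWLWith Γ f g) :
    ContinuousOn f Γ := by
  obtain ⟨𝒬, hdom, rfl, hpiece⟩ := hf
  rw [← Set.iUnion_subtype (· ∈ 𝒬) (·.1)]
  refine (locallyFinite_of_finite _).continuousOn_iUnion (fun q => (hdom q q.2).isClosed)
    fun q => ?_
  obtain ⟨i, hi⟩ := hpiece q q.2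
  exact (hga i).continuous.continuousOn.congr hi

theorem IsPWLWith.exists_le_and_ge (hΓ : Convex ℝ Γ) (hga : ∀ i, IsAffineFn (g i))
    (hf : IsPWLWith Γ f g) {x y : Fin d → ℝ} (hx : x ∈ Γ) (hy : y ∈ Γ) :
    ∃ k, g k x ≤ f x ∧ f y ≤ g k y := by
  have hseg : ∀ t ∈ Set.Icc (0 : ℝ) 1, lineMap x y t ∈ Γ := fun t ht => hΓ.lineMap_mem hx hy ht
  simpa using exists_lineMap_le_and_ge (φ := fun t => f (lineMap x y t))
    (u := fun i => g i x) (v := fun i => g i y)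
    ((hf.continuousOn hga).comp lineMap_continuous.continuousOn hseg) fun t ht => by
      obtain ⟨i, hi⟩ := hf.exists_eq (hseg t ht)
      exact ⟨i, by rw [hi, (hga i).apply_lineMap]⟩

end PiecewiseLinear

lemma IsPreconnected.forall_le_of_forall_ne {X α : Type*} [TopologicalSpace X] [LinearOrder α]
    [TopologicalSpace α] [OrderClosedTopology α] {C : Set X} (hC : IsPreconnected C)
    {φ ψ : X → α} (hφ : ContinuousOn φ C) (hψ : ContinuousOn ψ C)
    (hne : ∀ x ∈ C, φ x ≠ ψ x) {x : X} (hx : x ∈ C) (hle : φ x ≤ ψ x) :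
    ∀ y ∈ C, φ y ≤ ψ y := by
  intro y hy
  by_contra! hlt
  obtain ⟨z, hz, heq⟩ := hC.intermediate_value₂ hx hy hφ hψ hle hlt.le
  exact hne z hz heq

section Regions

variable {d n : ℕ} {Γ : Set (Fin d → ℝ)} {g : Fin n → (Fin d → ℝ) → ℝ}
  {P : Set (Fin d → ℝ)}

lemma subset_interior_of_mem_regionsOf (hP : P ∈ regionsOf (armCompl Γ g)) :
    P ⊆ interior Γ := by
  obtain ⟨x, -, rfl⟩ := hP
  exact fun y hy => (connectedComponentIn_subset _ _ hy).1

lemma forall_le_of_mem_regionsOf (hga : ∀ i, IsAffineFn (g i))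
    (hP : P ∈ regionsOf (armCompl Γ g)) {i j : Fin n} {x : Fin d → ℝ} (hx : x ∈ P)
    (hij : g i x ≤ g j x) : ∀ y ∈ P, g i y ≤ g j y := by
  obtain rfl | hne := eq_or_ne i j
  · exact fun _ _ => le_rfl
  obtain ⟨z, -, rfl⟩ := hP
  exact isPreconnected_connectedComponentIn.forall_le_of_forall_ne
    (hga i).continuous.continuousOn (hga j).continuous.continuousOn
    (fun y hy => (connectedComponentIn_subset _ _ hy).2 i j hne) hx hij

end Regions

theorem FP_eq_and_FQ_le_general {d n : ℕ} {Γ : Set (Fin d → ℝ)}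
    (hΓv : Convex ℝ Γ) {f : (Fin d → ℝ) → ℝ} {g : Fin n → (Fin d → ℝ) → ℝ}
    (hga : ∀ i, IsAffineFn (g i))
    (hf : IsPWLWith Γ f g)
    {P : Set (Fin d → ℝ)} (hP : P ∈ regionsOf (armCompl Γ g))
    {p : Fin n} (hfp : ∀ x ∈ P, f x = g p x) :
    (∀ x ∈ P,
      (Finset.univ.filter (fun i => ∀ y ∈ P, g p y ≤ g i y)).inf'
        ⟨p, Finset.mem_filter.mpr ⟨Finset.mem_univ _, fun _ _ => le_rfl⟩⟩
        (fun i => g i x) = f x) ∧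
    ∀ Q ∈ regionsOf (armCompl Γ g), ∀ q : Fin n, (∀ x ∈ Q, f x = g q x) →
      ∀ x ∈ P,
        (Finset.univ.filter (fun i => ∀ y ∈ Q, g q y ≤ g i y)).inf'
          ⟨q, Finset.mem_filter.mpr ⟨Finset.mem_univ _, fun _ _ => le_rfl⟩⟩
          (fun i => g i x) ≤ f x := by
  refine ⟨fun x hx => le_antisymm ?_ ?_, fun Q hQ q hfq x hx => ?_⟩
  · exact (Finset.inf'_le _ (Finset.mem_filter.2 ⟨Finset.mem_univ _, fun _ _ => le_rfl⟩)).trans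
      (hfp x hx).ge
  · exact (hfp x hx).trans_le (Finset.le_inf' _ _ fun i hi => (Finset.mem_filter.1 hi).2 x hx)
  · obtain ⟨y, hy, rfl⟩ := hQ
    have hyQ := mem_connectedComponentIn hy
    obtain ⟨k, hkx, hky⟩ := hf.exists_le_and_ge hΓv hga
      (interior_subset (subset_interior_of_mem_regionsOf hP hx)) (interior_subset hy.1)
    have hqk := forall_le_of_mem_regionsOf hga ⟨y, hy, rfl⟩ hyQ (hfq y hyQ ▸ hky)
    exact (Finset.inf'_le _ (Finset.mem_filter.2 ⟨Finset.mem_univ _, hqk⟩)).trans hkx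

/-- with `S_P = {i : g i ≥ g_{n(P)} on P}` and `F_P = min_{i ∈ S_P} g i`,
we have `F_P = f` on `P`, and `F_Q ≤ f` on `P` for every region `Q`. -/
theorem FP_eq_and_FQ_le {d n : ℕ} {Γ : Set (Fin d → ℝ)} (hΓc : IsClosed Γ)
    (hΓv : Convex ℝ Γ) {f : (Fin d → ℝ) → ℝ} {g : Fin n → (Fin d → ℝ) → ℝ}
    (hga : ∀ i, IsAffineFn (g i)) (hgd : Function.Injective g)
    (hf : IsPWLWith Γ f g)
    {P : Set (Fin d → ℝ)} (hP : P ∈ regionsOf (armCompl Γ g))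
    {p : Fin n} (hfp : ∀ x ∈ P, f x = g p x) :
    (∀ x ∈ P,
      (Finset.univ.filter (fun i => ∀ y ∈ P, g p y ≤ g i y)).inf'
        ⟨p, Finset.mem_filter.mpr ⟨Finset.mem_univ _, fun _ _ => le_rfl⟩⟩
        (fun i => g i x) = f x) ∧
    ∀ Q ∈ regionsOf (armCompl Γ g), ∀ q : Fin n, (∀ x ∈ Q, f x = g q x) →
      ∀ x ∈ P,
        (Finset.univ.filter (fun i => ∀ y ∈ Q, g q y ≤ g i y)).inf'
          ⟨q, Finset.mem_filter.mpr ⟨Finset.mem_univ _, fun _ _ => le_rfl⟩⟩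
          (fun i => g i x) ≤ f x :=
  FP_eq_and_FQ_le_general hΓv hga hf hP hfp
end
end
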